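/- arXiv:2304.05009 — 4 statements merged into one kernel-verified Lean document; each statement's English description precedes it below -/
import Mathlib

section
/- Let ℓ be a positive integer and a an integer. Let P(x) = a_0 + a_1 x + … + a_d x^d ∈ 𝔽_q[T][x] with deg_x P = d and coefficients satisfying |a_j| ≤ q^{(d − j + a)ℓ} for 0 ≤ j ≤ d. If P = P_1·P_2 for some P_1, P_2 ∈ 𝔽_q[T][x], then writing P_1(x) = b_0 + b_1 x + … + b_e x^e with e = deg_x P_1 ≤ d, the coefficients satisfy |b_j| ≤ q^{(e − j + a)ℓ} for 0 ≤ j ≤ e. -/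
/-!
Weight the coefficient of `x^j` by `c^j` with `c = q^ℓ`. The Gauss norm
`‖F‖ = max_j |f_j| c^j` built from the non-archimedean absolute value `|·|` of `𝔽_q[T]` is
multiplicative, the hypothesis says `‖P‖ ≤ c^(d + a)`, and the leading coefficient of `P₂` gives
`‖P₂‖ ≥ c^(deg P₂)`. Hence `‖P₁‖ ≤ c^(e + a)`, which bounds each coefficient of `P₁`.
-/

open Classical in
/-- The absolute value on `𝔽_q[T]`: `|x| = q^(deg x)` for `x ≠ 0`, and `|0| = 0`. -/
noncomputable def pabs (q : ℕ) {Fq : Type} [Field Fq] (x : Polynomial Fq) : ℝ :=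
  if x = 0 then 0 else (q : ℝ) ^ x.natDegree

open Polynomial

section Pabs

variable {q : ℕ} {K : Type} [Field K]

lemma pabs_zero (q : ℕ) : pabs q (0 : K[X]) = 0 := if_pos rfl

lemma pabs_of_ne_zero (q : ℕ) {x : K[X]} (hx : x ≠ 0) : pabs q x = (q : ℝ) ^ x.natDegree :=
  if_neg hx

lemma pabs_nonneg (q : ℕ) (x : K[X]) : 0 ≤ pabs q x := by
  unfold pabs; split_ifs <;> positivity

lemma one_le_pabs (hq : 1 ≤ q) {x : K[X]} (hx : x ≠ 0) : 1 ≤ pabs q x := by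
  rw [pabs_of_ne_zero q hx]
  exact one_le_pow₀ (by exact_mod_cast hq)

lemma pabs_add_le_max (hq : 1 ≤ q) (x y : K[X]) : pabs q (x + y) ≤ max (pabs q x) (pabs q y) := by
  by_cases hxy : x + y = 0
  · rw [hxy, pabs_zero]
    exact le_max_of_le_left (pabs_nonneg q x)
  by_cases hx : x = 0
  · simp [hx, pabs_zero, pabs_nonneg]
  by_cases hy : y = 0
  · simp [hy, pabs_zero, pabs_nonneg]
  have hq' : (1 : ℝ) ≤ q := by exact_mod_cast hq
  rw [pabs_of_ne_zero q hxy, pabs_of_ne_zero q hx, pabs_of_ne_zero q hy,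
    ← (pow_right_mono₀ hq').map_max]
  exact pow_le_pow_right₀ hq' (natDegree_add_le x y)

noncomputable def pabsAbv (hq : 1 ≤ q) : AbsoluteValue K[X] ℝ where
  toFun := pabs q
  map_mul' x y := by
    by_cases hx : x = 0
    · simp [hx, pabs_zero]
    by_cases hy : y = 0
    · simp [hy, pabs_zero]
    rw [pabs_of_ne_zero q (mul_ne_zero hx hy), pabs_of_ne_zero q hx, pabs_of_ne_zero q hy,
      natDegree_mul hx hy, pow_add]
  nonneg' := pabs_nonneg q
  eq_zero' x := ⟨fun h => by_contra fun hx => by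
      linarith [one_le_pabs hq hx], fun h => h ▸ pabs_zero q⟩
  add_le' x y := (pabs_add_le_max hq x y).trans
    (max_le_add_of_nonneg (pabs_nonneg q x) (pabs_nonneg q y))

@[simp]
lemma pabsAbv_apply (hq : 1 ≤ q) (x : K[X]) : pabsAbv hq x = pabs q x := rfl

lemma isNonarchimedean_pabsAbv (hq : 1 ≤ q) : IsNonarchimedean (pabsAbv (K := K) hq) :=
  pabs_add_le_max hq

end Pabs

namespace Polynomial

variable {R : Type*} [Ring R] {v : AbsoluteValue R ℝ} {c : ℝ}

lemma gaussNorm_le_rpow_of_coeff_le (hc : 0 < c) {p : R[X]} {s : ℝ}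
    (h : ∀ j ≤ p.natDegree, v (p.coeff j) ≤ c ^ ((p.natDegree : ℝ) - j + s)) :
    p.gaussNorm v c ≤ c ^ ((p.natDegree : ℝ) + s) := by
  unfold gaussNorm
  split_ifs with hp
  · refine Finset.sup'_le hp _ fun j hj => ?_
    calc v (p.coeff j) * c ^ j
        ≤ c ^ ((p.natDegree : ℝ) - j + s) * c ^ j := by
          gcongr
          exact h j (le_natDegree_of_mem_supp j hj)
      _ = c ^ ((p.natDegree : ℝ) + s) := by
          rw [← Real.rpow_add_natCast hc.ne']
          ring_nf
  · positivity

lemma coeff_le_rpow_of_gaussNorm_le (hc : 0 < c) {p : R[X]} {t : ℝ}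
    (h : p.gaussNorm v c ≤ c ^ t) (j : ℕ) : v (p.coeff j) ≤ c ^ (t - j) := by
  rw [Real.rpow_sub_natCast hc.ne', le_div_iff₀ (by positivity)]
  exact (le_gaussNorm v p hc.le j).trans h

theorem gaussNorm_le_rpow_of_mul (hna : IsNonarchimedean v) (hc : 1 ≤ c) {P₁ P₂ : R[X]} {s : ℝ}
    (hP₂ : 1 ≤ v P₂.leadingCoeff)
    (h : (P₁ * P₂).gaussNorm v c ≤ c ^ (((P₁ * P₂).natDegree : ℝ) + s)) :
    P₁.gaussNorm v c ≤ c ^ ((P₁.natDegree : ℝ) + s) := by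
  have hc0 : 0 < c := zero_lt_one.trans_le hc
  have hP₂_norm : c ^ P₂.natDegree ≤ P₂.gaussNorm v c :=
    calc c ^ P₂.natDegree ≤ v P₂.leadingCoeff * c ^ P₂.natDegree :=
          le_mul_of_one_le_left (by positivity) hP₂
      _ ≤ P₂.gaussNorm v c := le_gaussNorm v P₂ hc0.le _
  have hdeg : c ^ (((P₁ * P₂).natDegree : ℝ) + s)
      ≤ c ^ ((P₁.natDegree : ℝ) + s) * c ^ P₂.natDegree := by
    rw [← Real.rpow_add_natCast hc0.ne']
    refine Real.rpow_le_rpow_of_exponent_le hc ?_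
    have : ((P₁ * P₂).natDegree : ℝ) ≤ P₁.natDegree + P₂.natDegree := by
      exact_mod_cast natDegree_mul_le
    linarith
  refine le_of_mul_le_mul_right ?_ (pow_pos hc0 P₂.natDegree)
  calc P₁.gaussNorm v c * c ^ P₂.natDegree
      ≤ P₁.gaussNorm v c * P₂.gaussNorm v c := by
        gcongr
        exact gaussNorm_nonneg v P₁ hc0.le
    _ = (P₁ * P₂).gaussNorm v c := (gaussNorm_mul hna hc0 P₁ P₂).symm
    _ ≤ _ := h.trans hdeg

theorem coeff_le_rpow_of_mul (hna : IsNonarchimedean v) (hc : 1 ≤ c) {P₁ P₂ : R[X]} {s : ℝ}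
    (hP₂ : 1 ≤ v P₂.leadingCoeff)
    (h : ∀ j ≤ (P₁ * P₂).natDegree,
      v ((P₁ * P₂).coeff j) ≤ c ^ (((P₁ * P₂).natDegree : ℝ) - j + s)) (j : ℕ) :
    v (P₁.coeff j) ≤ c ^ ((P₁.natDegree : ℝ) - j + s) := by
  have hc0 : 0 < c := zero_lt_one.trans_le hc
  have := coeff_le_rpow_of_gaussNorm_le hc0
    (gaussNorm_le_rpow_of_mul hna hc hP₂ (gaussNorm_le_rpow_of_coeff_le hc0 h)) j
  rwa [add_sub_right_comm] at this

end Polynomial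

theorem factor_coefficient_bound_general
    (q : ℕ) (Fq : Type) [Field Fq] [Fintype Fq] (hq : Fintype.card Fq = q)
    (ℓ : ℕ) (a : ℤ)
    (P P₁ P₂ : Polynomial (Polynomial Fq)) (hP0 : P ≠ 0)
    (d : ℕ) (hd : P.natDegree = d)
    (hcoeff : ∀ j : ℕ, j ≤ d →
      pabs q (P.coeff j) ≤ (q : ℝ) ^ (((d : ℝ) - (j : ℝ) + (a : ℝ)) * (ℓ : ℝ)))
    (hfac : P = P₁ * P₂) :
    ∀ j : ℕ, j ≤ P₁.natDegree →
      pabs q (P₁.coeff j)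
        ≤ (q : ℝ) ^ (((P₁.natDegree : ℝ) - (j : ℝ) + (a : ℝ)) * (ℓ : ℝ)) := by
  have hq1 : 1 ≤ q := hq ▸ Fintype.card_pos
  have hrescale (t : ℝ) : (q : ℝ) ^ (t * ℓ) = ((q : ℝ) ^ ℓ) ^ t := by
    rw [mul_comm, Real.rpow_natCast_mul (Nat.cast_nonneg q)]
  have hP₂ : P₂ ≠ 0 := right_ne_zero_of_mul (hfac ▸ hP0)
  subst hd hfac
  intro j _
  simpa only [hrescale, pabsAbv_apply] using
    coeff_le_rpow_of_mul (isNonarchimedean_pabsAbv hq1) (one_le_pow₀ (by exact_mod_cast hq1))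
      (one_le_pabs hq1 (leadingCoeff_ne_zero.2 hP₂)) (by simpa only [hrescale, pabsAbv_apply] using hcoeff) j

/-- Lemma 3.2 (coefficient bounds pass to factors): let `ℓ` be a positive integer and
`a` an integer.  If `P ∈ 𝔽_q[T][x]` is nonzero of degree `d` in `x` with
`|coeff j P| ≤ q^{(d−j+a)ℓ}` for all `0 ≤ j ≤ d`, and `P = P₁·P₂`, then with
`e = deg_x P₁` one has `|coeff j P₁| ≤ q^{(e−j+a)ℓ}` for all `0 ≤ j ≤ e`. -/
theorem factor_coefficient_bound
    (q : ℕ) (Fq : Type) [Field Fq] [Fintype Fq] (hq : Fintype.card Fq = q)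
    (ℓ : ℕ) (hℓ : 0 < ℓ) (a : ℤ)
    (P P₁ P₂ : Polynomial (Polynomial Fq)) (hP0 : P ≠ 0)
    (d : ℕ) (hd : P.natDegree = d)
    (hcoeff : ∀ j : ℕ, j ≤ d →
      pabs q (P.coeff j) ≤ (q : ℝ) ^ (((d : ℝ) - (j : ℝ) + (a : ℝ)) * (ℓ : ℝ)))
    (hfac : P = P₁ * P₂) :
    ∀ j : ℕ, j ≤ P₁.natDegree →
      pabs q (P₁.coeff j)
        ≤ (q : ℝ) ^ (((P₁.natDegree : ℝ) - (j : ℝ) + (a : ℝ)) * (ℓ : ℝ)) :=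
  factor_coefficient_bound_general q Fq hq ℓ a P P₁ P₂ hP0 d hd hcoeff hfac
end

section
/- Let d, e ≥ 2 be integers and ℓ, a, b real numbers. Let P(x) = a_0 + a_1 x + … + a_{e−1} x^{e−1} and Q(x) = b_0 + b_1 x + … + b_{d−1} x^{d−1} in 𝔽_q[T][x] (with formal degrees e−1 and d−1; leading coefficients may vanish) satisfy |a_j| ≤ q^{(e − j + a)ℓ} for 0 ≤ j ≤ e−1 and |b_j| ≤ q^{(d − j + b)ℓ} for 0 ≤ j ≤ d−1. Then |Res(P,Q)| ≤ q^{((e+a)(d+b) − (a+1)(b+1))ℓ}. -/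
/-- The `(d+e−2) × (d+e−2)` Sylvester matrix of `P(x) = a₀ + … + a_{e−1}x^{e−1}` and
`Q(x) = b₀ + … + b_{d−1}x^{d−1}` (taken with formal degrees `e−1` and `d−1`): the first
`d−1` rows are the successive shifts of `(a_{e−1}, …, a₁, a₀)` and the last `e−1` rows
are the successive shifts of `(b_{d−1}, …, b₁, b₀)`. -/
noncomputable def sylvester {Fq : Type} [Field Fq] (d e : ℕ) (a b : ℕ → Polynomial Fq) :
    Matrix (Fin (d + e - 2)) (Fin (d + e - 2)) (Polynomial Fq) :=
  Matrix.of fun i j : Fin (d + e - 2) =>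
    if (i : ℕ) < d - 1 then
      (if (i : ℕ) ≤ (j : ℕ) ∧ (j : ℕ) ≤ (i : ℕ) + (e - 1) then
        a (e - 1 - ((j : ℕ) - (i : ℕ))) else 0)
    else
      (if (i : ℕ) - (d - 1) ≤ (j : ℕ) ∧ (j : ℕ) ≤ ((i : ℕ) - (d - 1)) + (d - 1) then
        b (d - 1 - ((j : ℕ) - ((i : ℕ) - (d - 1)))) else 0)

/-!
Expanding the determinant over permutations, the ultrametric inequality reduces the claim to
a bound on each term `∏ⱼ S (σ j) j`. The coefficient bounds say that the entry of the Sylvester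
matrix in row `r` and column `j` has absolute value at most `q^((j - r + w r) ℓ)`, where
`w r = 1 + A` on the `d - 1` rows of `P` and `w r = d + B` on the `e - 1` rows of `Q`. Along a
permutation the terms `j - r` cancel, so every term is at most `q^(ℓ ∑ w r)`, and
`∑ w r = (d - 1)(1 + A) + (e - 1)(d + B) = (e + A)(d + B) - (A + 1)(B + 1)`.
-/

open Finset

namespace Matrix

variable {R S n : Type*} [CommRing R] [Nontrivial R]
  [CommRing S] [LinearOrder S] [IsStrictOrderedRing S] [Fintype n] [DecidableEq n]

theorem det_le_prod_mul_prod_of_isNonarchimedean {A : Matrix n n R} {abv : AbsoluteValue R S}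
    (hna : IsNonarchimedean abv) {u v : n → S} (h : ∀ i j, abv (A i j) ≤ u i * v j) :
    abv A.det ≤ (∏ i, u i) * ∏ j, v j := by
  rw [det_apply]
  refine (hna.apply_sum_le_sup univ_nonempty).trans (sup'_le _ _ fun σ _ => ?_)
  calc abv (Equiv.Perm.sign σ • ∏ j, A (σ j) j)
      = ∏ j, abv (A (σ j) j) := by rw [abv.map_units_int_smul, abv.map_prod]
    _ ≤ ∏ j, (u (σ j) * v j) :=
        prod_le_prod (fun j _ => abv.nonneg _) fun j _ => h _ _
    _ = (∏ i, u i) * ∏ j, v j := by rw [prod_mul_distrib, Equiv.prod_comp σ u]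

theorem det_le_rpow_of_isNonarchimedean {A : Matrix n n R} {abv : AbsoluteValue R ℝ}
    (hna : IsNonarchimedean abv) {c : ℝ} (hc : 0 < c) {x y : n → ℝ}
    (h : ∀ i j, abv (A i j) ≤ c ^ (x i + y j)) :
    abv A.det ≤ c ^ (∑ i, x i + ∑ j, y j) := by
  rw [Real.rpow_add hc, Real.rpow_sum_of_pos hc, Real.rpow_sum_of_pos hc]
  exact det_le_prod_mul_prod_of_isNonarchimedean hna fun i j => (h i j).trans_eq
    (Real.rpow_add hc _ _)

end Matrix

@[simps]
noncomputable def AbsoluteValue.intToReal {R : Type*} [Semiring R] (abv : AbsoluteValue R ℤ) :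
    AbsoluteValue R ℝ where
  toFun x := abv x
  map_mul' x y := by simp
  nonneg' x := by exact_mod_cast abv.nonneg x
  eq_zero' x := by simp
  add_le' x y := by exact_mod_cast abv.add_le x y

theorem IsNonarchimedean.intToReal {R : Type*} [Semiring R]
    {abv : AbsoluteValue R ℤ} (hna : IsNonarchimedean abv) : IsNonarchimedean abv.intToReal :=
  fun x y => by simpa using (Int.cast_le (R := ℝ)).mpr (hna x y)

namespace Polynomial

variable {Fq : Type*} [Field Fq] [Fintype Fq]

theorem isNonarchimedean_cardPowDegree :
    IsNonarchimedean (cardPowDegree : AbsoluteValue Fq[X] ℤ) := by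
  intro p q
  by_cases hp : p = 0
  · simp [hp]
  by_cases hq : q = 0
  · simp [hq]
  by_cases hpq : p + q = 0
  · simp [hpq]
  have hcard : (1 : ℤ) ≤ Fintype.card Fq := by exact_mod_cast Fintype.card_pos
  rw [cardPowDegree_nonzero _ hpq, cardPowDegree_nonzero _ hp, cardPowDegree_nonzero _ hq]
  exact (pow_le_pow_right₀ hcard (natDegree_add_le p q)).trans_eq
    (pow_right_mono₀ hcard).map_max

end Polynomial

open scoped Polynomial

theorem pabs_card_eq_cardPowDegree {Fq : Type} [Field Fq] [Fintype Fq] (p : Fq[X]) :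
    pabs (Fintype.card Fq) p = Polynomial.cardPowDegree.intToReal p := by
  classical
  by_cases hp : p = 0 <;> simp [pabs, hp]

section Sylvester

variable {Fq : Type} [Field Fq] {q d e : ℕ} {L A B : ℝ} {a b : ℕ → Fq[X]}

def sylvesterRowWeight (d : ℕ) (A B : ℝ) (r : ℕ) : ℝ :=
  if r < d - 1 then 1 + A else d + B

theorem pabs_sylvester_le (he : 1 ≤ e)
    (ha : ∀ j : ℕ, j ≤ e - 1 → pabs q (a j) ≤ (q : ℝ) ^ (((e : ℝ) - (j : ℝ) + A) * L))
    (hb : ∀ j : ℕ, j ≤ d - 1 → pabs q (b j) ≤ (q : ℝ) ^ (((d : ℝ) - (j : ℝ) + B) * L))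
    (r j : Fin (d + e - 2)) :
    pabs q (sylvester d e a b r j) ≤
      (q : ℝ) ^ (((j : ℝ) - r + sylvesterRowWeight d A B r) * L) := by
  have hzero (x : ℝ) : pabs q (0 : Fq[X]) ≤ (q : ℝ) ^ x := by
    simpa [pabs] using Real.rpow_nonneg q.cast_nonneg x
  unfold sylvester sylvesterRowWeight
  simp only [Matrix.of_apply]
  split_ifs with hr hband hband'
  · convert ha (e - 1 - (j - r)) (Nat.sub_le _ _) using 3
    push_cast [Nat.cast_sub he, Nat.cast_sub hband.1,
      Nat.cast_sub (show (j : ℕ) - r ≤ e - 1 by omega)]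
    ring
  · exact hzero _
  · convert hb (d - 1 - (j - (r - (d - 1)))) (Nat.sub_le _ _) using 3
    rw [show d - 1 - (j - (r - (d - 1))) = r - j by omega, Nat.cast_sub (by omega)]
    ring
  · exact hzero _

theorem sum_sylvesterRowWeight (hd : 1 ≤ d) (he : 1 ≤ e) :
    ∑ r : Fin (d + e - 2), sylvesterRowWeight d A B r =
      (d - 1) * (1 + A) + (e - 1) * (d + B) := by
  rw [Fin.sum_univ_eq_sum_range (sylvesterRowWeight d A B),
    show d + e - 2 = (d - 1) + (e - 1) by omega, sum_range_add]
  have h_a_rows : ∀ r ∈ range (d - 1), sylvesterRowWeight d A B r = 1 + A :=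
    fun r hr => if_pos (mem_range.mp hr)
  have h_b_rows : ∀ r ∈ range (e - 1), sylvesterRowWeight d A B (d - 1 + r) = d + B :=
    fun r _ => if_neg (by omega)
  rw [sum_congr rfl h_a_rows, sum_congr rfl h_b_rows]
  simp only [sum_const, card_range, nsmul_eq_mul, Nat.cast_sub hd, Nat.cast_sub he, Nat.cast_one]

end Sylvester

/-- Lemma 3.4 (resultant bound): let `d, e ≥ 2` and `ℓ, A, B ∈ ℝ`.  If
`P(x) = a₀ + … + a_{e−1}x^{e−1}` and `Q(x) = b₀ + … + b_{d−1}x^{d−1}` in `𝔽_q[T][x]`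
satisfy `|a_j| ≤ q^{(e−j+A)ℓ}` for `0 ≤ j ≤ e−1` and `|b_j| ≤ q^{(d−j+B)ℓ}` for
`0 ≤ j ≤ d−1`, then `|Res(P,Q)| ≤ q^{((e+A)(d+B) − (A+1)(B+1))ℓ}`, where the resultant
is the determinant of the Sylvester matrix above. -/
theorem resultant_bound
    (q : ℕ) (Fq : Type) [Field Fq] [Fintype Fq] (hq : Fintype.card Fq = q)
    (d e : ℕ) (hd : 2 ≤ d) (he : 2 ≤ e) (L A B : ℝ)
    (a b : ℕ → Polynomial Fq)
    (ha : ∀ j : ℕ, j ≤ e - 1 →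
      pabs q (a j) ≤ (q : ℝ) ^ (((e : ℝ) - (j : ℝ) + A) * L))
    (hb : ∀ j : ℕ, j ≤ d - 1 →
      pabs q (b j) ≤ (q : ℝ) ^ (((d : ℝ) - (j : ℝ) + B) * L)) :
    pabs q (sylvester d e a b).det
      ≤ (q : ℝ) ^ ((((e : ℝ) + A) * ((d : ℝ) + B) - (A + 1) * (B + 1)) * L) := by
  subst hq
  have hcard : (0 : ℝ) < Fintype.card Fq := by exact_mod_cast Fintype.card_pos
  rw [pabs_card_eq_cardPowDegree]
  calc _ ≤ (Fintype.card Fq : ℝ) ^ (∑ r : Fin (d + e - 2), (sylvesterRowWeight d A B r - r) * L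
          + ∑ j : Fin (d + e - 2), (j : ℝ) * L) :=
        Matrix.det_le_rpow_of_isNonarchimedean
          Polynomial.isNonarchimedean_cardPowDegree.intToReal hcard fun r j => ?_
    _ = _ := by
        congr 1
        rw [← sum_mul, ← sum_mul, sum_sub_distrib, sum_sylvesterRowWeight (by omega) (by omega)]
        ring
  rw [← pabs_card_eq_cardPowDegree]
  convert pabs_sylvester_le (by omega) ha hb r j using 2
  ring
end

section
/- Let F ∈ 𝔽_q[T] be nonzero of degree r, and let a_1, …, a_d ∈ 𝔽_q[T] all be coprime to F. Let L = {(x_1, …, x_d) ∈ 𝔽_q[T]^d : a_1 x_1 + … + a_d x_d ≡ 0 (mod F)}. Then the dual lattice L* equals the set {(y_1/F, …, y_d/F) : y_1, …, y_d ∈ 𝔽_q[T] and there exists w ∈ 𝔽_q[T] with a_i·w ≡ y_i (mod F) for all 1 ≤ i ≤ d}. -/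
/-!
Pairing `x ∈ L*` with `F • eᵢ ∈ L` shows `x = y / F` for a polynomial vector `y`, and then
`⟨x, p⟩ = ⟨y, p⟩ / F` is a polynomial for all `p ∈ L` iff `F ∣ ⟨y, p⟩` whenever `F ∣ ⟨a, p⟩`.
Modulo `F` the vectors `aᵢ e_{i₀} - a_{i₀} eᵢ` lie in `L`, which forces `aᵢ y_{i₀} ≡ a_{i₀} yᵢ`,
i.e. `y ≡ w • a` with `w = a_{i₀}⁻¹ y_{i₀} mod F`. Injectivity of `𝔽_q[T] → 𝔽_q((1/T))` is the
transcendence of `T ↦ X⁻¹`.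
-/

/-- The embedding `𝔽_q[T] → 𝔽_q(T)_∞ = 𝔽_q((1/T))`, sending `T` to the inverse of the
Laurent-series variable (`T ↦ X⁻¹`, i.e. `T` is the single term of order `−1`). -/
noncomputable def polyEmb (Fq : Type) [Field Fq] (p : Polynomial Fq) : LaurentSeries Fq :=
  Polynomial.aeval (HahnSeries.single (-1 : ℤ) (1 : Fq) : LaurentSeries Fq) p

open Polynomial in
theorem LaurentSeries.transcendental_single_one (K : Type*) [Field K] :
    Transcendental K (HahnSeries.single (1 : ℤ) (1 : K) : LaurentSeries K) := by
  rw [transcendental_iff_injective]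
  convert algebraMap_hahnSeries_injective (R := K) (Γ := ℤ) using 1
  funext p
  induction p using Polynomial.induction_on' with
  | add p q hp hq => simp only [map_add, hp, hq]
  | monomial n c =>
    rw [← C_mul_X_pow_eq_monomial, algebraMap_hahnSeries_apply, coe_mul, coe_C, coe_pow, coe_X,
      map_mul, map_mul, map_pow, map_pow, HahnSeries.ofPowerSeries_C, HahnSeries.ofPowerSeries_X,
      aeval_C, aeval_X, HahnSeries.algebraMap_apply', PowerSeries.algebraMap_eq,
      HahnSeries.ofPowerSeries_C]

theorem LaurentSeries.transcendental_single_neg_one (K : Type*) [Field K] :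
    Transcendental K (HahnSeries.single (-1 : ℤ) (1 : K) : LaurentSeries K) := by
  rw [← inv_one, ← HahnSeries.inv_single, Transcendental, IsAlgebraic.inv_iff]
  exact LaurentSeries.transcendental_single_one K

noncomputable def polyEmbHom (Fq : Type) [Field Fq] : Polynomial Fq →+* LaurentSeries Fq :=
  (Polynomial.aeval (HahnSeries.single (-1 : ℤ) (1 : Fq) : LaurentSeries Fq)).toRingHom

theorem coe_polyEmbHom (Fq : Type) [Field Fq] : ⇑(polyEmbHom Fq) = polyEmb Fq :=
  rfl

theorem polyEmbHom_injective (Fq : Type) [Field Fq] : Function.Injective (polyEmbHom Fq) :=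
  transcendental_iff_injective.mp (LaurentSeries.transcendental_single_neg_one Fq)

section ModularLattice

variable {R K ι : Type*} [CommRing R] [Field K] [Fintype ι]

def dualLattice (φ : R →+* K) (L : Set (ι → K)) : Set (ι → K) :=
  {x | ∀ y ∈ L, ∑ i, x i * y i ∈ Set.range φ}

def modularLattice (φ : R →+* K) (a : ι → R) (F : R) : Set (ι → K) :=
  {y | ∃ p : ι → R, (∀ i, y i = φ (p i)) ∧ F ∣ ∑ i, a i * p i}

theorem sum_mul_single_sub_single [DecidableEq ι] (z : ι → R) (i j : ι) (b c : R) :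
    ∑ k, z k * (Pi.single i b - Pi.single j c : ι → R) k = z i * b - z j * c := by
  simp [mul_sub, Finset.sum_sub_distrib, Pi.single_apply]

theorem dvd_sum_mul_of_dvd_mul_sub {a y : ι → R} {F w : R} (hw : ∀ i, F ∣ a i * w - y i)
    {p : ι → R} (hp : F ∣ ∑ i, a i * p i) : F ∣ ∑ i, y i * p i := by
  have h : ∑ i, y i * p i = w * ∑ i, a i * p i - ∑ i, (a i * w - y i) * p i := by
    rw [Finset.mul_sum, ← Finset.sum_sub_distrib]
    exact Finset.sum_congr rfl fun i _ => by ring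
  rw [h]
  exact dvd_sub (dvd_mul_of_dvd_right hp w)
    (Finset.dvd_sum fun i _ => dvd_mul_of_dvd_left (hw i) _)

theorem exists_dvd_mul_sub_of_forall_dvd_sum {a y : ι → R} {F : R} (ha : ∀ i, IsCoprime (a i) F)
    (h : ∀ p : ι → R, F ∣ ∑ i, a i * p i → F ∣ ∑ i, y i * p i) :
    ∃ w, ∀ i, F ∣ a i * w - y i := by
  classical
  rcases isEmpty_or_nonempty ι with _ | ⟨⟨i₀⟩⟩
  · exact ⟨0, isEmptyElim⟩
  have cross : ∀ i, F ∣ a i * y i₀ - a i₀ * y i := fun i => by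
    have := h (Pi.single i₀ (a i) - Pi.single i (a i₀))
      (by rw [sum_mul_single_sub_single, mul_comm, sub_self]; exact dvd_zero F)
    rwa [sum_mul_single_sub_single, mul_comm (y i₀), mul_comm (y i)] at this
  -- `b` inverts `a i₀` modulo `F`
  obtain ⟨b, u, hbu⟩ := ha i₀
  refine ⟨b * y i₀, fun i => (ha i₀).symm.dvd_of_dvd_mul_left ?_⟩
  have h : a i₀ * (a i * (b * y i₀) - y i) =
      (a i * y i₀ - a i₀ * y i) - F * (u * (a i * y i₀)) := by
    linear_combination (a i * y i₀) * hbu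
  rw [h]
  exact dvd_sub (cross i) (dvd_mul_right _ _)

variable {φ : R →+* K}

theorem RingHom.div_mem_range_iff_dvd (hφ : Function.Injective φ) {F : R} (hF : F ≠ 0) (c : R) :
    φ c / φ F ∈ Set.range φ ↔ F ∣ c := by
  have hF' : φ F ≠ 0 := (map_ne_zero_iff φ hφ).mpr hF
  constructor
  · rintro ⟨m, hm⟩
    rw [eq_div_iff hF', ← map_mul] at hm
    exact ⟨m, hφ hm ▸ mul_comm m F⟩
  · rintro ⟨m, rfl⟩
    exact ⟨m, by rw [map_mul, mul_div_cancel_left₀ _ hF']⟩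

variable {a : ι → R} {F : R}

theorem map_mem_modularLattice {p : ι → R} (hp : F ∣ ∑ i, a i * p i) :
    (fun i => φ (p i)) ∈ modularLattice φ a F :=
  ⟨p, fun _ => rfl, hp⟩

theorem exists_eq_div_of_mem_dualLattice (hφ : Function.Injective φ) (hF : F ≠ 0) {x : ι → K}
    (hx : x ∈ dualLattice φ (modularLattice φ a F)) : ∃ y : ι → R, x = fun i => φ (y i) / φ F := by
  classical
  have hmul : ∀ i, x i * φ F ∈ Set.range φ := fun i => by
    have := hx _ (map_mem_modularLattice (p := Pi.single i F) (by simp [Pi.single_apply]))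
    simpa [Pi.single_apply, apply_ite φ] using this
  choose y hy using hmul
  exact ⟨y, funext fun i => by rw [eq_div_iff ((map_ne_zero_iff φ hφ).mpr hF), hy]⟩

theorem div_mem_dualLattice_iff (hφ : Function.Injective φ) (hF : F ≠ 0) {y : ι → R} :
    (fun i => φ (y i) / φ F) ∈ dualLattice φ (modularLattice φ a F) ↔
      ∀ p : ι → R, F ∣ ∑ i, a i * p i → F ∣ ∑ i, y i * p i := by
  have pairing : ∀ p : ι → R, ∑ i, φ (y i) / φ F * φ (p i) = φ (∑ i, y i * p i) / φ F := by
    intro p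
    simp only [map_sum, map_mul, Finset.sum_div, div_mul_eq_mul_div]
  constructor
  · intro hx p hp
    rw [← φ.div_mem_range_iff_dvd hφ hF, ← pairing]
    exact hx _ (map_mem_modularLattice hp)
  · rintro h z ⟨p, hz, hp⟩
    obtain rfl := funext hz
    rw [pairing, φ.div_mem_range_iff_dvd hφ hF]
    exact h p hp

theorem dualLattice_modularLattice (hφ : Function.Injective φ) (hF : F ≠ 0)
    (ha : ∀ i, IsCoprime (a i) F) :
    dualLattice φ (modularLattice φ a F) =
      {x | ∃ y : ι → R, ∃ w : R, (∀ i, x i = φ (y i) / φ F) ∧ ∀ i, F ∣ a i * w - y i} := by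
  ext x
  constructor
  · intro hx
    obtain ⟨y, rfl⟩ := exists_eq_div_of_mem_dualLattice hφ hF hx
    obtain ⟨w, hw⟩ :=
      exists_dvd_mul_sub_of_forall_dvd_sum ha ((div_mem_dualLattice_iff hφ hF).mp hx)
    exact ⟨y, w, fun _ => rfl, hw⟩
  · rintro ⟨y, w, hx, hw⟩
    obtain rfl := funext hx
    exact (div_mem_dualLattice_iff hφ hF).mpr fun _ => dvd_sum_mul_of_dvd_mul_sub hw

end ModularLattice

theorem dual_modular_lattice_general
    (d : ℕ) (Fq : Type) [Field Fq]
    (F : Polynomial Fq) (hF : F ≠ 0)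
    (a : Fin d → Polynomial Fq) (ha : ∀ i, IsCoprime (a i) F) :
    {x : Fin d → LaurentSeries Fq |
        ∀ y ∈ {y : Fin d → LaurentSeries Fq | ∃ p : Fin d → Polynomial Fq,
            (∀ i, y i = polyEmb Fq (p i)) ∧ F ∣ ∑ i, a i * p i},
          (∑ i, x i * y i) ∈ Set.range (polyEmb Fq)}
      = {x : Fin d → LaurentSeries Fq | ∃ y : Fin d → Polynomial Fq, ∃ w : Polynomial Fq,
          (∀ i, x i = polyEmb Fq (y i) / polyEmb Fq F) ∧
          (∀ i, F ∣ (a i * w - y i))} := by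
  rw [← coe_polyEmbHom]
  exact dualLattice_modularLattice (polyEmbHom_injective Fq) hF ha

/-- Lemma 5.5 (dual of a modular lattice): let `F ≠ 0` have degree `r`, let
`a₁, …, a_d ∈ 𝔽_q[T]` all be coprime to `F`, and let
`L = {(x₁,…,x_d) ∈ 𝔽_q[T]^d : a₁x₁ + … + a_dx_d ≡ 0 (mod F)}` inside `𝔽_q(T)_∞^d`.
Then the dual lattice `L* = {x : ⟨x,y⟩ ∈ 𝔽_q[T] for all y ∈ L}` equals
`{(y₁/F, …, y_d/F) : yᵢ ∈ 𝔽_q[T], ∃ w ∈ 𝔽_q[T], aᵢ·w ≡ yᵢ (mod F) for all i}`. -/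
theorem dual_modular_lattice
    (q r d : ℕ) (Fq : Type) [Field Fq] [Fintype Fq] (hq : Fintype.card Fq = q)
    (hd : 0 < d)
    (F : Polynomial Fq) (hF : F ≠ 0) (hFdeg : F.natDegree = r)
    (a : Fin d → Polynomial Fq) (ha : ∀ i, IsCoprime (a i) F) :
    {x : Fin d → LaurentSeries Fq |
        ∀ y ∈ {y : Fin d → LaurentSeries Fq | ∃ p : Fin d → Polynomial Fq,
            (∀ i, y i = polyEmb Fq (p i)) ∧ F ∣ ∑ i, a i * p i},
          (∑ i, x i * y i) ∈ Set.range (polyEmb Fq)}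
      = {x : Fin d → LaurentSeries Fq | ∃ y : Fin d → Polynomial Fq, ∃ w : Polynomial Fq,
          (∀ i, x i = polyEmb Fq (y i) / polyEmb Fq F) ∧
          (∀ i, F ∣ (a i * w - y i))} :=
  dual_modular_lattice_general d Fq F hF a ha
end

section
/- Fix a positive integer d and ε > 0. Then there exists a constant C = C(q,d,ε) such that the following holds: for every F ∈ 𝔽_q[T] of degree r, every polynomial Q ∈ 𝔽_q[T][x] of degree d in x whose leading coefficient is coprime to F, and every positive integer m with m < r·(1/d − ε), the number of x ∈ 𝔽_q[T] with deg x < m and Q(x) ≡ 0 (mod F) is at most C. -/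
/-!
Coppersmith's method, with a pigeonhole argument in place of lattice reduction. Adding a multiple
of `F X^d` to a Bézout multiple of `Q` makes `Q` monic of degree `d` without losing roots mod `F`;
normalizing, `F` is monic of degree `r` too. Modulo the polynomials `X^i Q^j F^(k-j)`, whose values
at every root of `Q` mod `F` are divisible by `F^k`, each `G ∈ 𝔽_q[T][X]` reduces to one whose
`p`-th coefficient has degree `< (k - ⌊p/d⌋) r` for `p < n = d(k+1)`. Candidates `G` of
`X`-degree `< n` whose `p`-th coefficient has degree `< rk - pm` outnumber these reductions once
`m n < r k`, so two of them reduce alike. Their difference `G ≠ 0` has `F^k ∣ G(x)` and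
`deg G(x) < rk` at each root `x` with `deg x < m`, so all those roots are roots of `G`: there are at
most `n` of them, and `k ≈ 1/(dε)` makes `m n < r k` follow from `m < r (1/d - ε)`.
-/

open Polynomial

theorem Nat.sub_one_sub_div_eq {d k j : ℕ} (hj : j < d * (k + 1)) :
    (d * (k + 1) - 1 - j) / d = k - j / d := by
  have hd : 0 < d := Nat.pos_of_ne_zero (by rintro rfl; simp at hj)
  have hjk : j / d ≤ k := Nat.lt_succ_iff.mp (Nat.div_lt_of_lt_mul hj)
  have hsplit : d * (k + 1) - 1 - j = d * (k - j / d) + (d - 1 - j % d) := by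
    have h1 := Nat.div_add_mod j d
    have h2 := Nat.mod_lt j hd
    have h3 : d * (k - j / d) + d * (j / d) = d * k := by rw [← mul_add, Nat.sub_add_cancel hjk]
    have h4 : d * (k + 1) = d * k + d := mul_add_one d k
    omega
  rw [hsplit, Nat.mul_add_div hd, Nat.div_eq_of_lt (a := d - 1 - j % d) (by omega), add_zero]

namespace Coppersmith

section VanishingIdeal

variable {A : Type*} [CommRing A]

noncomputable def vanishingIdeal (F : A) (Q : A[X]) (k : ℕ) : Ideal A[X] :=
  ⨅ x ∈ {x | F ∣ Q.eval x}, (Ideal.span {F ^ k}).comap (evalRingHom x)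

theorem mem_vanishingIdeal {F : A} {Q : A[X]} {k : ℕ} {G : A[X]} :
    G ∈ vanishingIdeal F Q k ↔ ∀ x, F ∣ Q.eval x → F ^ k ∣ G.eval x := by
  simp [vanishingIdeal, Ideal.mem_span_singleton]

theorem X_pow_mul_pow_mul_C_mem_vanishingIdeal (F : A) (Q : A[X]) (i : ℕ) {j k : ℕ}
    (hjk : j ≤ k) : X ^ i * Q ^ j * C (F ^ (k - j)) ∈ vanishingIdeal F Q k := by
  refine mem_vanishingIdeal.2 fun x hx => ?_
  rw [eval_mul, eval_mul, eval_C, eval_pow, eval_pow, ← Nat.add_sub_cancel' hjk, pow_add,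
    Nat.add_sub_cancel_left]
  exact mul_dvd_mul (dvd_mul_of_dvd_right (pow_dvd_pow_of_dvd hx j) _) dvd_rfl

end VanishingIdeal

section Reduction

variable {R : Type*} [CommRing R] [Nontrivial R] {F : R[X]} {Q : R[X][X]}

theorem natDegree_X_pow_mod_mul_pow_div (hQ : Q.Monic) (p : ℕ) :
    (X ^ (p % Q.natDegree) * Q ^ (p / Q.natDegree)).natDegree = p := by
  rw [(monic_X_pow _).natDegree_mul (hQ.pow _), natDegree_X_pow, hQ.natDegree_pow, mul_comm,
    Nat.mod_add_div]

theorem exists_sub_mem_vanishingIdeal_and_coeff_mem_degreeLT (hF : F.Monic) (hQ : Q.Monic)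
    {k p : ℕ} (hp : p ≤ Q.natDegree * (k + 1)) (H : R[X][X]) :
    ∃ H' : R[X][X], H - H' ∈ vanishingIdeal F Q k ∧ (∀ j, p ≤ j → H'.coeff j = H.coeff j) ∧
      ∀ j < p, H'.coeff j ∈ degreeLT R ((k - j / Q.natDegree) * F.natDegree) := by
  induction p generalizing H with
  | zero => exact ⟨H, by simp, fun _ _ => rfl, fun j hj => absurd hj j.not_lt_zero⟩
  | succ p ih =>
    set d := Q.natDegree
    have hpk : p / d ≤ k :=
      Nat.lt_succ_iff.mp (Nat.div_lt_of_lt_mul (show p < d * (k + 1) by omega))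
    set M := X ^ (p % d) * Q ^ (p / d)
    have hM : M.Monic := (monic_X_pow _).mul (hQ.pow _)
    have hMdeg : M.natDegree = p := natDegree_X_pow_mod_mul_pow_div hQ p
    set e := k - p / d
    -- `M * C (F ^ e)` has degree `p` and leading coefficient `F ^ e`, so subtracting `c` times it
    -- reduces the `X ^ p`-coefficient of `H` modulo `F ^ e` and leaves the higher ones alone
    set c := H.coeff p /ₘ F ^ e
    obtain ⟨H', hmem, hhigh, hlow⟩ := ih (by omega) (H - C c * (M * C (F ^ e)))
    have hcoeff : ∀ j, (H - C c * (M * C (F ^ e))).coeff j = H.coeff j - c * M.coeff j * F ^ e :=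
      fun j => by rw [coeff_sub, coeff_C_mul, coeff_mul_C, mul_assoc]
    refine ⟨H', ?_, fun j hj => ?_, fun j hj => ?_⟩
    · rw [show H - H' = C c * (M * C (F ^ e)) + (H - C c * (M * C (F ^ e)) - H') by ring]
      exact add_mem (Ideal.mul_mem_left _ _ (X_pow_mul_pow_mul_C_mem_vanishingIdeal F Q _ hpk))
        hmem
    · rw [hhigh j (by omega), hcoeff, coeff_eq_zero_of_natDegree_lt (p := M) (by omega), mul_zero,
        zero_mul, sub_zero]
    · obtain hj | rfl := (Nat.lt_succ_iff.mp hj).lt_or_eq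
      · exact hlow j hj
      · rw [hhigh j le_rfl, hcoeff, ← hMdeg, hM.coeff_natDegree, hMdeg, mul_one, mul_comm c,
          ← modByMonic_eq_sub_mul_div, mem_degreeLT, ← hF.natDegree_pow,
          ← degree_eq_natDegree (hF.pow e).ne_zero]
        exact degree_modByMonic_lt _ (hF.pow e)

end Reduction

section CoeffBox

variable (R : Type*) [CommRing R]

noncomputable def coeffBox (n : ℕ) (b : ℕ → ℕ) : Submodule R R[X][X] :=
  (degreeLT R[X] n).restrictScalars R ⊓
    ⨅ j, (degreeLT R (b j)).comap ((lcoeff R[X] j).restrictScalars R)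

variable {R}

theorem mem_coeffBox {n : ℕ} {b : ℕ → ℕ} {H : R[X][X]} :
    H ∈ coeffBox R n b ↔ H.degree < n ∧ ∀ j, H.coeff j ∈ degreeLT R (b j) := by
  simp [coeffBox, Submodule.mem_iInf, mem_degreeLT]

theorem natCard_degreeLT [Finite R] (s : ℕ) : Nat.card (degreeLT R s) = Nat.card R ^ s := by
  rw [Nat.card_congr (degreeLTEquiv R s).toEquiv, Nat.card_fun, Nat.card_fin]

theorem natCard_coeffBox [Finite R] (n : ℕ) (b : ℕ → ℕ) :
    Nat.card (coeffBox R n b) = Nat.card R ^ ∑ j ∈ Finset.range n, b j := by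
  let coeffs (H : coeffBox R n b) (j : Fin n) : degreeLT R (b j) :=
    ⟨H.1.coeff j, (mem_coeffBox.1 H.2).2 j⟩
  have hbij : Function.Bijective coeffs := by
    refine ⟨fun H₁ H₂ h => ?_, fun a => ?_⟩
    · have := (degreeLTEquiv R[X] n).injective
        (a₁ := ⟨H₁, mem_degreeLT.2 (mem_coeffBox.1 H₁.2).1⟩)
        (a₂ := ⟨H₂, mem_degreeLT.2 (mem_coeffBox.1 H₂.2).1⟩)
        (funext fun j => congrArg Subtype.val (congrFun h j))
      exact Subtype.ext (Subtype.mk.inj this)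
    · set P := (degreeLTEquiv R[X] n).symm fun j => (a j : R[X])
      have hP (j : Fin n) : P.1.coeff j = a j :=
        congrFun ((degreeLTEquiv R[X] n).apply_symm_apply _) j
      refine ⟨⟨P.1, mem_coeffBox.2 ⟨mem_degreeLT.1 P.2, fun j => ?_⟩⟩,
        funext fun j => Subtype.ext (hP j)⟩
      by_cases hj : j < n
      · exact hP ⟨j, hj⟩ ▸ (a ⟨j, hj⟩).2
      · have hPdeg : P.1.degree < j :=
          (mem_degreeLT.1 P.2).trans_le (Nat.cast_le.2 (not_lt.1 hj))
        rw [coeff_eq_zero_of_degree_lt hPdeg]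
        exact zero_mem _
  rw [Nat.card_congr (Equiv.ofBijective coeffs hbij), Nat.card_pi]
  simp only [natCard_degreeLT, Finset.prod_pow_eq_pow_sum, Fin.sum_univ_eq_sum_range]

theorem finite_coeffBox [Finite R] (n : ℕ) (b : ℕ → ℕ) : (coeffBox R n b : Set R[X][X]).Finite :=
  Set.finite_of_ncard_ne_zero <| by
    rw [← Nat.card_coe_set_eq, SetLike.coe_sort_coe, natCard_coeffBox]
    exact pow_ne_zero _ Nat.card_pos.ne'

theorem eval_mem_degreeLT {N m : ℕ} {G : R[X][X]} (hG : ∀ j, G.coeff j ∈ degreeLT R (N - j * m))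
    {x : R[X]} (hx : x.degree < m) : G.eval x ∈ degreeLT R N := by
  rw [eval_eq_sum_range]
  refine Submodule.sum_mem _ fun j _ => ?_
  by_cases hc : G.coeff j = 0
  · rw [hc, zero_mul]; exact zero_mem _
  have hcj : (G.coeff j).natDegree < N - j * m :=
    (natDegree_lt_iff_degree_lt hc).2 (mem_degreeLT.1 (hG j))
  have hxj : (x ^ j).natDegree ≤ j * m :=
    natDegree_pow_le.trans (Nat.mul_le_mul_left j (natDegree_le_of_degree_le hx.le))
  rw [mem_degreeLT]
  refine degree_le_natDegree.trans_lt (Nat.cast_lt.2 ?_)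
  exact natDegree_mul_le.trans_lt (by omega)

end CoeffBox

theorem sum_range_sub_div_mul_lt {d k m r : ℕ} (hd : 0 < d) (h : m * (d * (k + 1)) < r * k) :
    ∑ j ∈ Finset.range (d * (k + 1)), (k - j / d) * r <
      ∑ j ∈ Finset.range (d * (k + 1)), (r * k - j * m) := by
  set n := d * (k + 1)
  have hn : 0 < n := Nat.mul_pos hd k.succ_pos
  have hreflect (f : ℕ → ℕ) : 2 * ∑ j ∈ Finset.range n, f j =
      ∑ j ∈ Finset.range n, (f j + f (n - 1 - j)) := by
    rw [Finset.sum_add_distrib, Finset.sum_range_reflect, two_mul]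
  suffices 2 * ∑ j ∈ Finset.range n, (k - j / d) * r <
      2 * ∑ j ∈ Finset.range n, (r * k - j * m) by omega
  rw [hreflect, hreflect]
  -- pairing `j` with `n - 1 - j`, the left summands add up to `r * k`, the right ones to more
  refine Finset.sum_lt_sum_of_nonempty (Finset.nonempty_range_iff.2 hn.ne') fun j hj => ?_
  have hj := Finset.mem_range.1 hj
  have hjk : j / d ≤ k := Nat.lt_succ_iff.mp (Nat.div_lt_of_lt_mul hj)
  have hleft : (k - j / d) * r + (k - (k - j / d)) * r = r * k := by
    rw [Nat.sub_sub_self hjk, ← add_mul, Nat.sub_add_cancel hjk, mul_comm]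
  have hright : j * m + (n - 1 - j) * m = (n - 1) * m := by
    rw [← add_mul]; congr 1; omega
  have hlt : (n - 1) * m < r * k :=
    (Nat.mul_le_mul_right m (Nat.sub_le n 1)).trans_lt (mul_comm m n ▸ h)
  rw [Nat.sub_one_sub_div_eq hj]
  omega

theorem exists_ne_zero_forall_eval_eq_zero {R : Type*} [CommRing R] [Finite R] [Nontrivial R]
    {F : R[X]} {Q : R[X][X]} (hF : F.Monic) (hQ : Q.Monic) (hd : 0 < Q.natDegree) {k m : ℕ}
    (h : m * (Q.natDegree * (k + 1)) < F.natDegree * k) :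
    ∃ G : R[X][X], G ≠ 0 ∧ G.natDegree < Q.natDegree * (k + 1) ∧
      ∀ x : R[X], x.degree < m → F ∣ Q.eval x → G.eval x = 0 := by
  set n := Q.natDegree * (k + 1)
  set S := coeffBox R n fun j => F.natDegree * k - j * m
  set T := coeffBox R n fun j => (k - j / Q.natDegree) * F.natDegree
  choose reduce hreduce using
    exists_sub_mem_vanishingIdeal_and_coeff_mem_degreeLT (k := k) hF hQ le_rfl
  have hmaps : ∀ H ∈ (S : Set R[X][X]), reduce H ∈ (T : Set R[X][X]) := by
    intro H hH
    obtain ⟨-, hhigh, hlow⟩ := hreduce H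
    have hzero (j : ℕ) (hj : n ≤ j) : (reduce H).coeff j = 0 := by
      rw [hhigh j hj, coeff_eq_zero_of_degree_lt ((mem_coeffBox.1 hH).1.trans_le
        (Nat.cast_le.2 hj))]
    refine mem_coeffBox.2 ⟨degree_lt_iff_coeff_zero _ _ |>.2 hzero, fun j => ?_⟩
    by_cases hj : j < n
    · exact hlow j hj
    · rw [hzero j (not_lt.1 hj)]; exact zero_mem _
  have hcard : (T : Set R[X][X]).ncard < (S : Set R[X][X]).ncard := by
    simp only [← Nat.card_coe_set_eq, SetLike.coe_sort_coe, S, T, natCard_coeffBox]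
    exact Nat.pow_lt_pow_right Finite.one_lt_card (sum_range_sub_div_mul_lt hd h)
  obtain ⟨H₁, h₁, H₂, h₂, hne, heq⟩ :=
    Set.exists_ne_map_eq_of_ncard_lt_of_maps_to hcard hmaps (finite_coeffBox ..)
  have hG : H₁ - H₂ ∈ S := S.sub_mem h₁ h₂
  refine ⟨H₁ - H₂, sub_ne_zero.2 hne, ?_, fun x hx hQx => ?_⟩
  · exact (natDegree_lt_iff_degree_lt (sub_ne_zero.2 hne)).2 (mem_coeffBox.1 hG).1
  have hdvd : F ^ k ∣ (H₁ - H₂).eval x := by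
    have := sub_mem (hreduce H₁).1 (hreduce H₂).1
    rw [heq, sub_sub_sub_cancel_right] at this
    exact mem_vanishingIdeal.1 this x hQx
  have hdeg : ((H₁ - H₂).eval x).degree < (F ^ k).degree := by
    rw [degree_eq_natDegree (hF.pow k).ne_zero, hF.natDegree_pow, mul_comm, ← mem_degreeLT]
    exact eval_mem_degreeLT (mem_coeffBox.1 hG).2 hx
  by_contra hne0
  exact (hF.pow k).not_dvd_of_degree_lt hne0 hdeg hdvd

theorem exists_monic_dvd_eval_of_isCoprime {A : Type*} [CommRing A] [Nontrivial A] {F : A}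
    {Q : A[X]} (h : IsCoprime Q.leadingCoeff F) :
    ∃ Q' : A[X], Q'.Monic ∧ Q'.natDegree = Q.natDegree ∧ ∀ x, F ∣ Q.eval x → F ∣ Q'.eval x := by
  obtain ⟨u, v, huv⟩ := h
  set Q' := C u * Q + C (v * F) * X ^ Q.natDegree
  have hcoeff : Q'.coeff Q.natDegree = 1 := by
    rw [coeff_add, coeff_C_mul, coeff_C_mul, coeff_X_pow_self, mul_one, ← huv, leadingCoeff]
  have hle : Q'.natDegree ≤ Q.natDegree :=
    natDegree_add_le_of_degree_le (natDegree_C_mul_le _ _)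
      ((natDegree_C_mul_le _ _).trans (natDegree_X_pow _).le)
  refine ⟨Q', monic_of_natDegree_le_of_coeff_eq_one _ hle hcoeff,
    natDegree_eq_of_le_of_coeff_ne_zero hle (hcoeff ▸ one_ne_zero), fun x hx => ?_⟩
  simp only [Q', eval_add, eval_mul, eval_C, eval_pow, eval_X]
  exact dvd_add (dvd_mul_of_dvd_right hx u) (dvd_mul_of_dvd_left (dvd_mul_left F v) _)

theorem ncard_le_of_isCoprime {K : Type*} [Field K] [Finite K] {F : K[X]} (hF : F ≠ 0)
    {Q : K[X][X]} (hcop : IsCoprime Q.leadingCoeff F) (hd : 0 < Q.natDegree) {k m : ℕ}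
    (h : m * (Q.natDegree * (k + 1)) < F.natDegree * k) :
    {x : K[X] | x.degree < m ∧ F ∣ Q.eval x}.ncard ≤ Q.natDegree * (k + 1) := by
  classical
  obtain ⟨Q', hQ', hQ'deg, hQ'dvd⟩ := exists_monic_dvd_eval_of_isCoprime hcop
  obtain ⟨G, hG0, hGdeg, hG⟩ := exists_ne_zero_forall_eval_eq_zero (monic_normalize hF) hQ'
    (hQ'deg ▸ hd) (by rwa [hQ'deg, natDegree_eq_of_degree_eq degree_normalize])
  calc {x : K[X] | x.degree < m ∧ F ∣ Q.eval x}.ncard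
      ≤ (G.rootSet K[X]).ncard := by
        refine Set.ncard_le_ncard (fun x ⟨hx, hQx⟩ => ?_) (rootSet_finite G _)
        refine mem_rootSet.2 ⟨hG0, ?_⟩
        simpa using hG x hx ((normalize_associated F).dvd_iff_dvd_left.2 (hQ'dvd x hQx))
    _ ≤ G.natDegree := ncard_rootSet_le G _
    _ ≤ Q.natDegree * (k + 1) := hQ'deg ▸ hGdeg.le

theorem mul_lt_of_lt_mul_one_div_sub {d m r : ℕ} {ε : ℝ} (hd : 0 < d) (hε : 0 < ε)
    (h : (m : ℝ) < r * (1 / d - ε)) :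
    m * (d * (⌈1 / (d * ε)⌉₊ + 1)) < r * ⌈1 / (d * ε)⌉₊ := by
  set k := ⌈1 / (d * ε)⌉₊
  have hdε : 0 < (d : ℝ) * ε := by positivity
  have hk : 1 ≤ (d : ℝ) * ε * k := by
    have := (div_le_iff₀ hdε).1 (Nat.le_ceil (1 / (d * ε)))
    linarith
  have : (m : ℝ) * (d * (k + 1)) < r * k :=
    calc (m : ℝ) * (d * (k + 1)) < r * (1 / d - ε) * (d * (k + 1)) :=
          mul_lt_mul_of_pos_right h (by positivity)
      _ = r * (k + 1 - d * ε * (k + 1)) := by field_simp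
      _ ≤ r * k := mul_le_mul_of_nonneg_left (by nlinarith) r.cast_nonneg
  exact_mod_cast this

end Coppersmith

theorem coppersmith_root_count_general
    (d : ℕ) (Fq : Type) [Field Fq] [Fintype Fq]
    (hd : 0 < d) (ε : ℝ) (hε : 0 < ε) :
    ∃ C : ℝ, 0 < C ∧
      ∀ (F : Polynomial Fq) (r : ℕ), F.degree = (r : WithBot ℕ) →
      ∀ Q : Polynomial (Polynomial Fq), Q.natDegree = d → IsCoprime Q.leadingCoeff F →
      ∀ m : ℕ, 0 < m → (m : ℝ) < (r : ℝ) * (1 / (d : ℝ) - ε) →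
      (Set.ncard {x : Polynomial Fq |
          x.degree < (m : WithBot ℕ) ∧ F ∣ Q.eval x} : ℝ) ≤ C := by
  refine ⟨(d * (⌈1 / (d * ε)⌉₊ + 1) : ℕ), by positivity, ?_⟩
  rintro F r hFdeg Q rfl hcop m - hmr
  have hF : F ≠ 0 := by rintro rfl; simp at hFdeg
  have hk := Coppersmith.mul_lt_of_lt_mul_one_div_sub hd hε hmr
  rw [← natDegree_eq_of_degree_eq_some hFdeg] at hk
  exact_mod_cast Coppersmith.ncard_le_of_isCoprime hF hcop hd hk

/-- Lemma 7.2 (function-field Coppersmith bound): for a fixed positive integer `d` and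
`ε > 0` there is a constant `C = C(q,d,ε)` such that for every `F ∈ 𝔽_q[T]` of degree
`r`, every `Q ∈ 𝔽_q[T][x]` of degree `d` in `x` whose leading coefficient is coprime to
`F`, and every positive integer `m < r(1/d − ε)`, the number of `x ∈ 𝔽_q[T]` with
`deg x < m` and `Q(x) ≡ 0 (mod F)` is at most `C`. -/
theorem coppersmith_root_count
    (q d : ℕ) (Fq : Type) [Field Fq] [Fintype Fq] (hq : Fintype.card Fq = q)
    (hd : 0 < d) (ε : ℝ) (hε : 0 < ε) :
    ∃ C : ℝ, 0 < C ∧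
      ∀ (F : Polynomial Fq) (r : ℕ), F.degree = (r : WithBot ℕ) →
      ∀ Q : Polynomial (Polynomial Fq), Q.natDegree = d → IsCoprime Q.leadingCoeff F →
      ∀ m : ℕ, 0 < m → (m : ℝ) < (r : ℝ) * (1 / (d : ℝ) - ε) →
      (Set.ncard {x : Polynomial Fq |
          x.degree < (m : WithBot ℕ) ∧ F ∣ Q.eval x} : ℝ) ≤ C :=
  coppersmith_root_count_general d Fq hd ε hε
end
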